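/- arXiv:0901.4829 — 2 statements merged into one kernel-verified Lean document; each statement's English description precedes it below -/
import Mathlib

section
/- (Pohozaev identity) Let n ≥ 1 be a natural number and let u : (0,∞) → ℝ be twice differentiable with u(r) > 0 for all r > 0, satisfying u''(r) + ((n-1)/r) u'(r) + f(u(r)) = 0 for all r > 0. Define P(r) = r^n (u'(r)² + 2F(u(r))) + (n-2) r^{n-1} u(r) u'(r). Then P is differentiable on (0,∞) and P'(r) = r^{n-1} Σ(u(r)) for all r > 0. -/
/-!
Differentiate `P` by the product and chain rules, using `F' = f`, and eliminate `u''` with the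
equation multiplied by `r`. The `u'²` terms cancel because `N - 2(N - 1) + (N - 2) = 0`, the
`r^{N-2} u u'` and `rᴺ u' f(u)` terms cancel in pairs, and `r^{N-1}(2N F(u) - (N - 2) u f(u))`
is what remains.
-/

/-- The double power nonlinearity `f(u) = -ω u + u^p - u^q`. -/
noncomputable def f (ω p q u : ℝ) : ℝ := -ω * u + u ^ p - u ^ q

/-- The primitive `F(u) = -(ω/2)u² + u^{p+1}/(p+1) - u^{q+1}/(q+1)`. -/
noncomputable def F (ω p q u : ℝ) : ℝ :=
  -(ω / 2) * u ^ 2 + u ^ (p + 1) / (p + 1) - u ^ (q + 1) / (q + 1)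

/-- The Pohozaev polynomial `Σ(u) = 2nF(u) - (n-2)u f(u)`. -/
noncomputable def Sig (n : ℕ) (ω p q u : ℝ) : ℝ :=
  2 * n * F ω p q u - ((n : ℝ) - 2) * u * f ω p q u

/-- The Pohozaev function `P(r) = rⁿ(u'(r)² + 2F(u(r))) + (n-2)r^{n-1}u(r)u'(r)`. -/
noncomputable def P (n : ℕ) (ω p q : ℝ) (u u' : ℝ → ℝ) (r : ℝ) : ℝ :=
  r ^ (n : ℝ) * ((u' r) ^ 2 + 2 * F ω p q (u r)) +
    ((n : ℝ) - 2) * r ^ ((n : ℝ) - 1) * u r * u' r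

theorem hasDerivAt_F {p q : ℝ} (ω : ℝ) (hp : 0 ≤ p) (hq : 0 ≤ q) (x : ℝ) :
    HasDerivAt (F ω p q) (f ω p q x) x := by
  have hpow : ∀ s : ℝ, 0 ≤ s →
      HasDerivAt (fun y : ℝ => y ^ (s + 1) / (s + 1)) (x ^ s) x := fun s hs => by
    refine ((Real.hasDerivAt_rpow_const (p := s + 1) (Or.inr (by linarith))).div_const
      (s + 1)).congr_deriv ?_
    field_simp
    rw [add_sub_cancel_right]
  have hsq : HasDerivAt (fun y : ℝ => -(ω / 2) * y ^ 2) (-ω * x) x := by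
    refine ((hasDerivAt_pow 2 x).const_mul (-(ω / 2))).congr_deriv ?_
    norm_num
    ring
  exact (hsq.add (hpow p hp)).sub (hpow q hq)

theorem hasDerivAt_pohozaev {N r : ℝ} {G g u u' u'' : ℝ → ℝ} (hr : 0 < r)
    (hG : HasDerivAt G (g (u r)) (u r)) (hu : HasDerivAt u (u' r) r)
    (hu' : HasDerivAt u' (u'' r) r)
    (hode : u'' r + (N - 1) / r * u' r + g (u r) = 0) :
    HasDerivAt
      (fun s => s ^ N * (u' s ^ 2 + 2 * G (u s)) + (N - 2) * s ^ (N - 1) * u s * u' s)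
      (r ^ (N - 1) * (2 * N * G (u r) - (N - 2) * u r * g (u r))) r := by
  have hrN : HasDerivAt (fun s : ℝ => s ^ N) (N * r ^ (N - 1)) r :=
    Real.hasDerivAt_rpow_const (Or.inl hr.ne')
  have hrN1 : HasDerivAt (fun s : ℝ => s ^ (N - 1)) ((N - 1) * r ^ (N - 2)) r := by
    convert Real.hasDerivAt_rpow_const (p := N - 1) (Or.inl hr.ne') using 3
    ring
  have hderiv := (hrN.mul (((hu'.pow 2).add ((hG.comp r hu).const_mul 2)))).add
    (((hrN1.const_mul (N - 2)).mul hu).mul hu')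
  have hrpow_sub_one : r ^ (N - 1) = r ^ (N - 2) * r := by
    rw [← Real.rpow_add_one hr.ne']
    ring_nf
  have hrpow : r ^ N = r ^ (N - 2) * r ^ 2 := by
    rw [← Real.rpow_natCast, ← Real.rpow_add hr]
    norm_num
  have hode' : r * u'' r + (N - 1) * u' r + r * g (u r) = 0 := by
    field_simp at hode
    linarith
  refine hderiv.congr_deriv ?_
  simp only [Pi.add_apply, Pi.mul_apply, Pi.pow_apply, Function.comp_apply, hrpow, hrpow_sub_one]
  linear_combination (2 * r ^ (N - 2) * r * u' r + (N - 2) * r ^ (N - 2) * u r) * hode'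

theorem pohozaev_identity_general (p q ω : ℝ) (hp : 1 < p) (hpq : p < q)
    (n : ℕ) (u u' u'' : ℝ → ℝ)
    (hu : ∀ r, 0 < r → HasDerivAt u (u' r) r)
    (hu' : ∀ r, 0 < r → HasDerivAt u' (u'' r) r)
    (hode : ∀ r, 0 < r → u'' r + ((n : ℝ) - 1) / r * u' r + f ω p q (u r) = 0) :
    ∀ r, 0 < r →
      HasDerivAt (P n ω p q u u') (r ^ ((n : ℝ) - 1) * Sig n ω p q (u r)) r := fun r hr =>
  hasDerivAt_pohozaev hr (hasDerivAt_F ω (by linarith) (by linarith) (u r)) (hu r hr) (hu' r hr)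
    (hode r hr)

/-- Pohozaev identity: if `u` is a positive twice differentiable solution of
`u'' + ((n-1)/r)u' + f(u) = 0` on `(0,∞)`, then `P` is differentiable on `(0,∞)`
with `P'(r) = r^{n-1} Σ(u(r))`. -/
theorem pohozaev_identity (p q ω : ℝ) (hp : 1 < p) (hpq : p < q) (hω : 0 < ω)
    (n : ℕ) (hn : 1 ≤ n) (u u' u'' : ℝ → ℝ)
    (hu : ∀ r, 0 < r → HasDerivAt u (u' r) r)
    (hu' : ∀ r, 0 < r → HasDerivAt u' (u'' r) r)
    (hupos : ∀ r, 0 < r → 0 < u r)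
    (hode : ∀ r, 0 < r → u'' r + ((n : ℝ) - 1) / r * u' r + f ω p q (u r) = 0) :
    ∀ r, 0 < r →
      HasDerivAt (P n ω p q u u') (r ^ ((n : ℝ) - 1) * Sig n ω p q (u r)) r :=
  pohozaev_identity_general p q ω hp hpq n u u' u'' hu hu' hode
end

section
/- Let n ≥ 3 be a natural number and 0 < ω < ω_{p,q}. Let β be the smaller positive zero of F (so F < 0 on (0,β) and F > 0 on (β,θ) for the larger zero θ), and let B > 0 be such that Σ < 0 on (0,B) and Σ > 0 on (B,C) for some C ∈ (B,∞]. Then β < B. -/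
/-- The critical frequency `ω_{p,q}`. -/
noncomputable def omegaPQ (p q : ℝ) : ℝ :=
  (2 * (q - p) / ((p + 1) * (q - 1))) *
    (((p - 1) * (q + 1)) / ((p + 1) * (q - 1))) ^ ((p - 1) / (q - p))

open Real Set

/-- The maximiser `s` of `F(u)/u²` on `(0, ∞)`, the root of `(p-1)/(p+1) = (q-1)/(q+1) u^{q-p}`;
the maximum value `(ω_{p,q} - ω)/2` is where `ω_{p,q}` comes from. -/
noncomputable def criticalPoint (p q : ℝ) : ℝ :=
  (((p - 1) * (q + 1)) / ((p + 1) * (q - 1))) ^ (1 / (q - p))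

section

variable {p q : ℝ}

lemma criticalPoint_pos (hp : 1 < p) (hpq : p < q) : 0 < criticalPoint p q := by
  unfold criticalPoint
  have : 0 < ((p - 1) * (q + 1)) / ((p + 1) * (q - 1)) := by
    apply div_pos <;> apply mul_pos <;> linarith
  positivity

lemma criticalPoint_rpow (hp : 1 < p) (hpq : p < q) (a : ℝ) :
    criticalPoint p q ^ a = (((p - 1) * (q + 1)) / ((p + 1) * (q - 1))) ^ (a / (q - p)) := by
  have : 0 ≤ ((p - 1) * (q + 1)) / ((p + 1) * (q - 1)) := by
    apply div_nonneg <;> apply mul_nonneg <;> linarith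
  rw [criticalPoint, ← rpow_mul this, one_div_mul_eq_div]

lemma F_criticalPoint (ω : ℝ) (hp : 1 < p) (hpq : p < q) :
    F ω p q (criticalPoint p q) = criticalPoint p q ^ 2 * (omegaPQ p q - ω) / 2 := by
  have hs := criticalPoint_pos hp hpq
  have hsp : criticalPoint p q ^ (p + 1) =
      criticalPoint p q ^ 2 * criticalPoint p q ^ (p - 1) := by
    rw [← rpow_two, ← rpow_add hs]; ring_nf
  have hsq : criticalPoint p q ^ (q + 1) =
      criticalPoint p q ^ 2 * criticalPoint p q ^ (p - 1) * criticalPoint p q ^ (q - p) := by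
    rw [← rpow_two, ← rpow_add hs, ← rpow_add hs]; ring_nf
  rw [F, omegaPQ, hsp, hsq, criticalPoint_rpow hp hpq (p - 1), criticalPoint_rpow hp hpq (q - p),
    div_self (sub_ne_zero.mpr hpq.ne'), rpow_one]
  generalize ((p - 1) * (q + 1) / ((p + 1) * (q - 1))) ^ ((p - 1) / (q - p)) = X
  have : p + 1 ≠ 0 := by linarith
  have : q + 1 ≠ 0 := by linarith
  have : q - 1 ≠ 0 := by linarith
  field_simp
  ring

lemma F_criticalPoint_pos {ω : ℝ} (hp : 1 < p) (hpq : p < q) (hω : ω < omegaPQ p q) :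
    0 < F ω p q (criticalPoint p q) := by
  have := criticalPoint_pos hp hpq
  have : 0 < omegaPQ p q - ω := by linarith
  rw [F_criticalPoint ω hp hpq]
  positivity

lemma mul_f_sub_two_mul_F {u : ℝ} (ω : ℝ) (hu : 0 < u) (hp : p ≠ -1) (hq : q ≠ -1) :
    u * f ω p q u - 2 * F ω p q u =
      u ^ (p + 1) * ((p - 1) / (p + 1) - (q - 1) / (q + 1) * u ^ (q - p)) := by
  have hqp : u ^ (q + 1) = u ^ (p + 1) * u ^ (q - p) := by
    rw [← rpow_add hu]; ring_nf
  have hp1 : p + 1 ≠ 0 := fun h => hp (by linarith)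
  have hq1 : q + 1 ≠ 0 := fun h => hq (by linarith)
  have hP : u * u ^ p = u ^ (p + 1) := by rw [rpow_add_one hu.ne', mul_comm]
  have hQ : u * u ^ q = u ^ (p + 1) * u ^ (q - p) := by rw [← hqp, rpow_add_one hu.ne', mul_comm]
  rw [f, F, hqp]
  field_simp
  linear_combination (p + 1) * (q + 1) * (hP - hQ)

lemma mul_f_sub_two_mul_F_pos {u : ℝ} (ω : ℝ) (hp : 1 < p) (hpq : p < q) (hu : 0 < u)
    (hus : u < criticalPoint p q) : 0 < u * f ω p q u - 2 * F ω p q u := by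
  have hq1 : q + 1 ≠ 0 := by linarith
  have hq1' : q - 1 ≠ 0 := by linarith
  have key : (q - 1) / (q + 1) * u ^ (q - p) < (p - 1) / (p + 1) :=
    calc (q - 1) / (q + 1) * u ^ (q - p)
        < (q - 1) / (q + 1) * criticalPoint p q ^ (q - p) := by
          gcongr
          exact div_pos (by linarith) (by linarith)
      _ = (p - 1) / (p + 1) := by
          rw [criticalPoint_rpow hp hpq, div_self (by linarith), rpow_one]
          field_simp
  rw [mul_f_sub_two_mul_F ω hu (by linarith) (by linarith)]
  exact mul_pos (rpow_pos_of_pos hu _) (sub_pos.mpr key)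

end

lemma Sig_eq (n : ℕ) (ω p q u : ℝ) :
    Sig n ω p q u = 4 * F ω p q u - ((n : ℝ) - 2) * (u * f ω p q u - 2 * F ω p q u) := by
  rw [Sig]; ring

lemma continuous_Sig (n : ℕ) (ω : ℝ) {p q : ℝ} (hp : 0 ≤ p) (hq : 0 ≤ q) :
    Continuous (Sig n ω p q) := by
  have := continuous_rpow_const hp
  have := continuous_rpow_const hq
  have := continuous_rpow_const (show 0 ≤ p + 1 by linarith)
  have := continuous_rpow_const (show 0 ≤ q + 1 by linarith)
  unfold Sig F f
  fun_prop

lemma lt_of_pos_of_neg_on_Ioo {g : ℝ → ℝ} {β u : ℝ} (hneg : ∀ v, 0 < v → v < β → g v < 0)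
    (hβ : g β = 0) (hu : 0 < u) (hgu : 0 < g u) : β < u := by
  by_contra! h
  rcases h.lt_or_eq with h | rfl
  · exact (hneg u hu h).not_gt hgu
  · exact hgu.ne' hβ

lemma nonneg_of_pos_on_Ioo_right {g : ℝ → ℝ} {B : ℝ} {C : EReal}
    (hg : ContinuousWithinAt g (Ioi B) B) (hBC : (B : EReal) < C)
    (hpos : ∀ v : ℝ, B < v → (v : EReal) < C → 0 < g v) : 0 ≤ g B := by
  obtain ⟨c, hBc, hcC⟩ := EReal.lt_iff_exists_real_btwn.mp hBC
  refine ge_of_tendsto hg ?_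
  filter_upwards [Ioo_mem_nhdsGT (EReal.coe_lt_coe_iff.mp hBc)] with v hv
  exact (hpos v hv.1 (lt_trans (EReal.coe_lt_coe_iff.mpr hv.2) hcC)).le

theorem beta_lt_B_general (p q ω : ℝ) (hp : 1 < p) (hpq : p < q)
    (n : ℕ) (hn : 3 ≤ n) (hωpq : ω < omegaPQ p q)
    (β : ℝ)
    (hF1 : ∀ u, 0 < u → u < β → F ω p q u < 0)
    (hFβ : F ω p q β = 0)
    (B : ℝ) (hB : 0 < B)
    (C : EReal) (hBC : (B : EReal) < C)
    (hSig2 : ∀ v : ℝ, B < v → (v : EReal) < C → 0 < Sig n ω p q v) :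
    β < B := by
  have hβs : β < criticalPoint p q := lt_of_pos_of_neg_on_Ioo hF1 hFβ
    (criticalPoint_pos hp hpq) (F_criticalPoint_pos hp hpq hωpq)
  rcases le_or_gt (criticalPoint p q) B with hsB | hBs
  · exact hβs.trans_le hsB
  have hSigB : 0 ≤ Sig n ω p q B := nonneg_of_pos_on_Ioo_right
    (continuous_Sig n ω (by linarith) (by linarith)).continuousWithinAt hBC hSig2
  have hn2 : (0 : ℝ) < (n : ℝ) - 2 := by
    have : (3 : ℝ) ≤ n := by exact_mod_cast hn
    linarith
  have hFB : 0 < F ω p q B := by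
    have := mul_pos hn2 (mul_f_sub_two_mul_F_pos ω hp hpq hB hBs)
    rw [Sig_eq] at hSigB
    linarith
  exact lt_of_pos_of_neg_on_Ioo hF1 hFβ hB hFB

/-- For `n ≥ 3` and `0 < ω < ω_{p,q}`: if `β` is the smaller positive zero of `F`
(`F < 0` on `(0,β)`, `F > 0` on `(β,θ)` with larger zero `θ`) and `B > 0` satisfies
`Σ < 0` on `(0,B)` and `Σ > 0` on `(B,C)` for some `C ∈ (B,∞]`, then `β < B`. -/
theorem beta_lt_B (p q ω : ℝ) (hp : 1 < p) (hpq : p < q) (hω : 0 < ω)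
    (n : ℕ) (hn : 3 ≤ n) (hωpq : ω < omegaPQ p q)
    (β θ : ℝ) (hβ : 0 < β) (hβθ : β < θ)
    (hF1 : ∀ u, 0 < u → u < β → F ω p q u < 0)
    (hFβ : F ω p q β = 0)
    (hF2 : ∀ u, β < u → u < θ → 0 < F ω p q u)
    (hFθ : F ω p q θ = 0)
    (B : ℝ) (hB : 0 < B)
    (hSig1 : ∀ v, 0 < v → v < B → Sig n ω p q v < 0)
    (C : EReal) (hBC : (B : EReal) < C)
    (hSig2 : ∀ v : ℝ, B < v → (v : EReal) < C → 0 < Sig n ω p q v) :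
    β < B :=
  beta_lt_B_general p q ω hp hpq n hn hωpq β hF1 hFβ B hB C hBC hSig2
end
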